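/- arXiv:2604.05870 — 4 statements merged into one kernel-verified Lean document; each statement's English description precedes it below -/
import Mathlib

section
/- Let F₁, …, F_r (r ≥ 1) be random Pauli errors on a finite set Ω, defined on a common probability space and possibly dependent, such that F_i is local stochastic of strength p_i ∈ [0,1] for each i ∈ [r]. Then the pointwise product F₁·…·F_r, defined by (F₁·…·F_r)(w) = F₁(w) + … + F_r(w) in P, is local stochastic of strength p′ = r · (max_i p_i)^{1/r}; that is, Pr[W ⊆ supp(F₁·…·F_r)] ≤ (r · max_i p_i^{1/r})^{|W|} for every subset W ⊆ Ω. (Lemma 1.1(iii) of the paper.) -/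
/-!
If every wire of `W` carries a nonzero total error `∑ i, F i a w`, then some factor is nonzero at
each wire, which colours `W` by `ι`; so the event is covered by the `|ι| ^ |W|` colouring events.
For a fixed colouring, pigeonhole gives a colour class `i` with at least `|W| / |ι|` wires, on all
of which `F i` is nonzero, so the colouring event has measure at most `p i ^ (|W| / |ι|)`, which is
at most `(q ^ (1 / |ι|)) ^ |W|` as `p i ≤ q ≤ 1`.
-/

open MeasureTheory

/-- The single-qubit Pauli group modulo phases, written additively. -/
abbrev Pauli : Type := ZMod 2 × ZMod 2

/-- A random Pauli error `F` on a finite set `Ω` of wires is *local stochastic of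
strength `p`* if for every subset `W ⊆ Ω` the probability that `W` is contained in the
support of `F` is at most `p ^ |W|`. -/
def IsLocalStochastic {α Ω : Type*} [MeasurableSpace α] [Fintype Ω] (μ : Measure α)
    (F : α → Ω → Pauli) (p : ℝ) : Prop :=
  ∀ W : Finset Ω, μ {a | ∀ w ∈ W, F a w ≠ 0} ≤ ENNReal.ofReal (p ^ W.card)

open Finset

theorem setOf_forall_sum_ne_zero_subset_iUnion {α Ω ι M : Type*} [AddCommMonoid M] [Fintype ι]
    (F : ι → α → Ω → M) (W : Finset Ω) :
    {a | ∀ w ∈ W, ∑ i, F i a w ≠ 0} ⊆ ⋃ c : W → ι, {a | ∀ w : W, F (c w) a w ≠ 0} := by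
  intro a ha
  have hcolor (w : W) : ∃ i, F i a w ≠ 0 := by
    obtain ⟨i, -, hi⟩ := exists_ne_zero_of_sum_ne_zero (ha w w.2)
    exact ⟨i, hi⟩
  choose c hc using hcolor
  exact Set.mem_iUnion.2 ⟨c, hc⟩

theorem measure_setOf_forall_sum_ne_zero_le {α Ω ι M : Type*} [MeasurableSpace α]
    [DecidableEq Ω] [AddCommMonoid M] [Fintype ι] (μ : Measure α) (F : ι → α → Ω → M)
    (W : Finset Ω) {b : ENNReal} (hb : ∀ c : W → ι, μ {a | ∀ w : W, F (c w) a w ≠ 0} ≤ b) :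
    μ {a | ∀ w ∈ W, ∑ i, F i a w ≠ 0} ≤ (Fintype.card ι : ENNReal) ^ #W * b := by
  calc μ {a | ∀ w ∈ W, ∑ i, F i a w ≠ 0}
      ≤ μ (⋃ c : W → ι, {a | ∀ w : W, F (c w) a w ≠ 0}) :=
        measure_mono (setOf_forall_sum_ne_zero_subset_iUnion F W)
    _ ≤ ∑ c : W → ι, μ {a | ∀ w : W, F (c w) a w ≠ 0} := measure_iUnion_fintype_le μ _
    _ ≤ ∑ _c : W → ι, b := sum_le_sum fun c _ => hb c
    _ = (Fintype.card ι : ENNReal) ^ #W * b := by simp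

theorem Fintype.exists_card_div_card_le_card_fiber {β ι : Type*} [Fintype β] [Fintype ι]
    [DecidableEq ι] [Nonempty ι] (c : β → ι) :
    ∃ i, (Fintype.card β : ℝ) / Fintype.card ι ≤ #{b | c b = i} :=
  Fintype.exists_le_card_fiber_of_nsmul_le_card c <| by
    rw [nsmul_eq_mul, mul_div_cancel₀ _ (by positivity)]

theorem pow_le_rpow_one_div_pow {p q : ℝ} {k m r : ℕ} (hp : 0 ≤ p) (hpq : p ≤ q) (hq : q ≤ 1)
    (hkm : (k : ℝ) / r ≤ m) : p ^ m ≤ (q ^ ((1 : ℝ) / r)) ^ k := by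
  have hq0 : 0 ≤ q := hp.trans hpq
  calc p ^ m ≤ q ^ m := pow_le_pow_left₀ hp hpq m
    _ = q ^ (m : ℝ) := (Real.rpow_natCast q m).symm
    _ ≤ q ^ ((k : ℝ) / r) := Real.rpow_le_rpow_of_exponent_ge' hq0 hq (by positivity) hkm
    _ = (q ^ ((1 : ℝ) / r)) ^ k := by
        rw [← Real.rpow_natCast, ← Real.rpow_mul hq0, one_div_mul_eq_div]

theorem measure_forall_colored_ne_zero_le {α Ω ι : Type*} [MeasurableSpace α]
    [Fintype Ω] [DecidableEq ι] {μ : Measure α} {F : ι → α → Ω → Pauli} {p : ι → ℝ}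
    (hF : ∀ i, IsLocalStochastic μ (F i) (p i)) {W : Finset Ω} (c : W → ι) (i : ι) :
    μ {a | ∀ w : W, F (c w) a w ≠ 0} ≤ ENNReal.ofReal (p i ^ #{w | c w = i}) := by
  calc μ {a | ∀ w : W, F (c w) a w ≠ 0}
      ≤ μ {a | ∀ w ∈ ({w | c w = i} : Finset W).map (Function.Embedding.subtype _), F i a w ≠ 0} :=
        measure_mono fun a ha _ hw => by
          simp only [mem_map, mem_filter, mem_univ, true_and] at hw
          obtain ⟨w, rfl, rfl⟩ := hw
          exact ha w
    _ ≤ ENNReal.ofReal (p i ^ #{w | c w = i}) := by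
        simpa using hF i (({w | c w = i} : Finset W).map (Function.Embedding.subtype _))

theorem IsLocalStochastic.sum {α Ω ι : Type*} [MeasurableSpace α] [Fintype Ω] [Fintype ι]
    [Nonempty ι] {μ : Measure α} {F : ι → α → Ω → Pauli} {p : ι → ℝ} {q : ℝ}
    (hF : ∀ i, IsLocalStochastic μ (F i) (p i)) (hp : ∀ i, 0 ≤ p i) (hpq : ∀ i, p i ≤ q)
    (hq : q ≤ 1) :
    IsLocalStochastic μ (fun a w => ∑ i, F i a w)
      (Fintype.card ι * q ^ ((1 : ℝ) / Fintype.card ι)) := by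
  classical
  intro W
  have hq0 : 0 ≤ q := (hp (Classical.arbitrary ι)).trans (hpq _)
  calc μ {a | ∀ w ∈ W, ∑ i, F i a w ≠ 0}
      ≤ (Fintype.card ι : ENNReal) ^ #W *
          ENNReal.ofReal ((q ^ ((1 : ℝ) / Fintype.card ι)) ^ #W) := by
        refine measure_setOf_forall_sum_ne_zero_le μ F W fun c => ?_
        obtain ⟨i, hi⟩ := Fintype.exists_card_div_card_le_card_fiber c
        refine (measure_forall_colored_ne_zero_le hF c i).trans (ENNReal.ofReal_le_ofReal ?_)
        exact pow_le_rpow_one_div_pow (hp i) (hpq i) hq (by simpa using hi)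
    _ = ENNReal.ofReal ((Fintype.card ι * q ^ ((1 : ℝ) / Fintype.card ι)) ^ #W) := by
        rw [mul_pow, ENNReal.ofReal_mul (by positivity), ENNReal.ofReal_pow (Nat.cast_nonneg _),
          ENNReal.ofReal_natCast]

theorem prod_localStochastic_general {α Ω : Type*} [MeasurableSpace α] [Fintype Ω]
    (μ : Measure α)
    (r : ℕ) (hr : 1 ≤ r)
    (p : Fin r → ℝ) (hp0 : ∀ i, 0 ≤ p i) (hp1 : ∀ i, p i ≤ 1)
    (F : Fin r → α → Ω → Pauli)
    (hF : ∀ i, IsLocalStochastic μ (F i) (p i)) :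
    IsLocalStochastic μ (fun a w => ∑ i, F i a w)
      ((r : ℝ) * (⨆ i, p i) ^ ((1 : ℝ) / (r : ℝ))) := by
  have : Nonempty (Fin r) := ⟨⟨0, hr⟩⟩
  simpa using IsLocalStochastic.sum hF hp0
    (le_ciSup (Set.finite_range p).bddAbove) (ciSup_le hp1)

/-- **Lemma 1.1(iii)**: if `F₁, …, F_r` are (possibly dependent) random Pauli errors,
with `F_i` local stochastic of strength `p_i`, then the pointwise product
`F₁ ⋅ … ⋅ F_r` is local stochastic of strength `p' = r · (max_i p_i)^(1/r)`. -/
theorem prod_localStochastic {α Ω : Type*} [MeasurableSpace α] [Fintype Ω]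
    (μ : Measure α) [IsProbabilityMeasure μ]
    (r : ℕ) (hr : 1 ≤ r)
    (p : Fin r → ℝ) (hp0 : ∀ i, 0 ≤ p i) (hp1 : ∀ i, p i ≤ 1)
    (F : Fin r → α → Ω → Pauli)
    (hF : ∀ i, IsLocalStochastic μ (F i) (p i)) :
    IsLocalStochastic μ (fun a w => ∑ i, F i a w)
      ((r : ℝ) * (⨆ i, p i) ^ ((1 : ℝ) / (r : ℝ))) :=
  prod_localStochastic_general μ r hr p hp0 hp1 F hF
end

section
/- Let F and F̃ be random Pauli errors on a finite set Ω, defined on a common probability space, each local stochastic of strength p ∈ [0,1], and let L ⊆ Ω be a fixed subset. Define the localization F^{↾L} to be equal to F on the event {supp(F) ⊆ L} and equal to the identically-zero function otherwise, and define F̃^{↾L} analogously. If F^{↾L} = F̃^{↾L} holds with probability 1, then Pr[F ≠ F̃] ≤ 2 · |Ω \ L| · p. (Probabilistic core of Lemma 2.1(iii).) -/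
open MeasureTheory

open scoped Classical in
/-- The localization `f^{↾L}` of a Pauli error: equal to `f` if `supp f ⊆ L`, and
equal to the identity (zero) error otherwise. -/
noncomputable def localize {Ω : Type*} (L : Finset Ω) (f : Ω → Pauli) : Ω → Pauli :=
  if ∀ w : Ω, f w ≠ 0 → w ∈ L then f else 0

section LocalStochastic

variable {α Ω : Type*} [MeasurableSpace α] [Fintype Ω] {μ : Measure α} {F : α → Ω → Pauli}
  {p : ℝ}

theorem IsLocalStochastic.measure_ne_zero_le (hF : IsLocalStochastic μ F p) (w : Ω) :
    μ {a | F a w ≠ 0} ≤ ENNReal.ofReal p := by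
  simpa using hF {w}

theorem IsLocalStochastic.measure_exists_ne_zero_le (hF : IsLocalStochastic μ F p)
    (s : Finset Ω) :
    μ {a | ∃ w ∈ s, F a w ≠ 0} ≤ s.card * ENNReal.ofReal p := by
  calc μ {a | ∃ w ∈ s, F a w ≠ 0} = μ (⋃ w ∈ s, {a | F a w ≠ 0}) := by
        congr 1; ext a; simp
    _ ≤ ∑ w ∈ s, μ {a | F a w ≠ 0} := measure_biUnion_finset_le _ _
    _ ≤ ∑ _w ∈ s, ENNReal.ofReal p := Finset.sum_le_sum fun w _ => hF.measure_ne_zero_le w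
    _ = s.card * ENNReal.ofReal p := by rw [Finset.sum_const, nsmul_eq_mul]

end LocalStochastic

theorem localize_eq_self {Ω : Type*} {L : Finset Ω} {f : Ω → Pauli}
    (hf : ∀ w ∉ L, f w = 0) : localize L f = f := by
  refine if_pos fun w hw => ?_
  by_contra hwL
  exact hw (hf w hwL)

theorem exists_ne_zero_of_localize_eq_of_ne {Ω : Type*} [DecidableEq Ω] [Fintype Ω]
    {L : Finset Ω} {f g : Ω → Pauli} (h : localize L f = localize L g) (hne : f ≠ g) :
    (∃ w ∈ Lᶜ, f w ≠ 0) ∨ ∃ w ∈ Lᶜ, g w ≠ 0 := by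
  contrapose! hne
  simp only [Finset.mem_compl] at hne
  rwa [localize_eq_self hne.1, localize_eq_self hne.2] at h

theorem prob_ne_of_localize_eq_general {α Ω : Type*} [MeasurableSpace α] [Fintype Ω] [DecidableEq Ω]
    (μ : Measure α)
    (p : ℝ)
    (F F' : α → Ω → Pauli)
    (hF : IsLocalStochastic μ F p) (hF' : IsLocalStochastic μ F' p)
    (L : Finset Ω)
    (hloc : ∀ᵐ a ∂μ, localize L (F a) = localize L (F' a)) :
    μ {a | F a ≠ F' a} ≤ ENNReal.ofReal (2 * (Lᶜ.card : ℝ) * p) :=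
  calc μ {a | F a ≠ F' a}
      ≤ μ ({a | ∃ w ∈ Lᶜ, F a w ≠ 0} ∪ {a | ∃ w ∈ Lᶜ, F' a w ≠ 0}) :=
        measure_mono_ae <| hloc.mono fun a ha hne => exists_ne_zero_of_localize_eq_of_ne ha hne
    _ ≤ Lᶜ.card * ENNReal.ofReal p + Lᶜ.card * ENNReal.ofReal p :=
        (measure_union_le _ _).trans <|
          add_le_add (hF.measure_exists_ne_zero_le _) (hF'.measure_exists_ne_zero_le _)
    _ = ENNReal.ofReal (2 * (Lᶜ.card : ℝ) * p) := by
        rw [ENNReal.ofReal_mul (by positivity), ← two_mul, ← mul_assoc]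
        norm_num

/-- **Probabilistic core of Lemma 2.1(iii)**: if `F` and `F̃` are local stochastic
Pauli errors of strength `p` whose localizations to `L` agree almost surely, then
`F ≠ F̃` with probability at most `2 · |Ω \ L| · p`. -/
theorem prob_ne_of_localize_eq {α Ω : Type*} [MeasurableSpace α] [Fintype Ω] [DecidableEq Ω]
    (μ : Measure α) [IsProbabilityMeasure μ]
    (p : ℝ) (hp0 : 0 ≤ p) (hp1 : p ≤ 1)
    (F F' : α → Ω → Pauli)
    (hF : IsLocalStochastic μ F p) (hF' : IsLocalStochastic μ F' p)
    (L : Finset Ω)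
    (hloc : ∀ᵐ a ∂μ, localize L (F a) = localize L (F' a)) :
    μ {a | F a ≠ F' a} ≤ ENNReal.ofReal (2 * (Lᶜ.card : ℝ) * p) :=
  prob_ne_of_localize_eq_general μ p F F' hF hF' L hloc
end

section
/- Let Ω be a finite set and let S be a random subset of Ω that is local stochastic of strength p ∈ [0,1]. Let U, V ≥ 1 be integers, let A₁, …, A_m ⊆ Ω be pairwise disjoint subsets with |A_j| ≤ U for all j, and let B₁, …, B_m ⊆ Ω be pairwise disjoint subsets with |B_j| ≤ V for all j. Let L be a random subset of Ω, defined on the same probability space, such that with probability 1: L ⊆ B₁ ∪ … ∪ B_m, and for every j ∈ [m], if L ∩ B_j ≠ ∅ then S ∩ A_j ≠ ∅. Then L is local stochastic of strength (U·p)^{1/V}; that is, Pr[W ⊆ L] ≤ ((U·p)^{1/V})^{|W|} for every subset W ⊆ Ω. (Claim 4.2 inside the proof of Lemma 4.3, circuit error cleaning for adaptive read-once rectangles.) -/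
/-! If `L` meets `B_j` only when `S` meets `A_j`, then the event `W ⊆ L` forces `S` to meet
every `A_j` with `j ∈ J := {j | W ∩ B_j ≠ ∅}`. Choosing one point of `S ∩ A_j` for each such
`j` gives a set of `|J|` distinct points inside `S` (the `A_j` are disjoint), and there are at
most `U^|J|` such choices, so a union bound yields `Pr[W ⊆ L] ≤ (U p)^|J|`. Since the `B_j`
have at most `V` elements and cover `W`, `|W| ≤ V |J|`, and `(U p)^|J| = q^(V |J|) ≤ q^|W|`
for `q = (U p)^(1/V) ≤ 1`; when `q ≥ 1` there is nothing to prove. -/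

open MeasureTheory

/-- A random subset `S` of a finite set `Ω` is *local stochastic of strength `p`* if for
every subset `W ⊆ Ω` the probability that `W ⊆ S` is at most `p ^ |W|`. -/
def IsLocalStochasticSet {α Ω : Type*} [MeasurableSpace α] [Fintype Ω] (μ : Measure α)
    (S : α → Set Ω) (p : ℝ) : Prop :=
  ∀ W : Finset Ω, μ {a | ↑W ⊆ S a} ≤ ENNReal.ofReal (p ^ W.card)

open Finset Function

theorem Finset.card_le_card_filter_inter_nonempty_mul {ι Ω : Type*} [Fintype ι] [DecidableEq Ω]
    {W : Finset Ω} {B : ι → Finset Ω} {V : ℕ} (hW : (W : Set Ω) ⊆ ⋃ j, B j)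
    (hB : ∀ j, #(B j) ≤ V) :
    #W ≤ #{j | (W ∩ B j).Nonempty} * V := by
  refine (card_le_card fun w hw => ?_).trans
    (card_biUnion_le_card_mul _ (fun j => W ∩ B j) V fun j _ =>
      (card_le_card inter_subset_right).trans (hB j))
  obtain ⟨_, ⟨j, rfl⟩, hj⟩ := hW hw
  exact mem_biUnion.2 ⟨j, mem_filter.2 ⟨mem_univ j, w, mem_inter.2 ⟨hw, hj⟩⟩,
    mem_inter.2 ⟨hw, hj⟩⟩

theorem Finset.card_image_attach_of_mem_pi {ι β : Type*} [DecidableEq ι] [DecidableEq β]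
    {J : Finset ι} {A : ι → Finset β} (hA : (J : Set ι).PairwiseDisjoint A)
    {g : ∀ j ∈ J, β} (hg : g ∈ J.pi A) :
    #(J.attach.image fun j => g j.1 j.2) = #J := by
  rw [card_image_of_injective _ fun j j' h => Subtype.ext ?_, card_attach]
  exact hA.elim_finset j.2 j'.2 _ (mem_pi.1 hg j j.2) (h ▸ mem_pi.1 hg j' j'.2)

section

variable {α Ω : Type*} [MeasurableSpace α] [Fintype Ω] {μ : Measure α}

theorem isLocalStochasticSet_of_one_le [IsProbabilityMeasure μ] (S : α → Set Ω) {q : ℝ}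
    (hq : 1 ≤ q) : IsLocalStochasticSet μ S q :=
  fun _ => prob_le_one.trans (ENNReal.one_le_ofReal.2 (one_le_pow₀ hq))

theorem IsLocalStochasticSet.measure_forall_inter_nonempty_le {S : α → Set Ω} {p : ℝ}
    (hS : IsLocalStochasticSet μ S p) {ι : Type*} [DecidableEq ι] [DecidableEq Ω]
    (J : Finset ι) {A : ι → Finset Ω} (hA : (J : Set ι).PairwiseDisjoint A) :
    μ {a | ∀ j ∈ J, (S a ∩ A j).Nonempty} ≤
      (∏ j ∈ J, #(A j) : ℕ) * ENNReal.ofReal (p ^ #J) := by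
  let transversal (g : ∀ j ∈ J, Ω) : Finset Ω := J.attach.image fun j => g j.1 j.2
  have hcover : {a | ∀ j ∈ J, (S a ∩ A j).Nonempty} ⊆
      ⋃ g ∈ J.pi A, {a | ↑(transversal g) ⊆ S a} := by
    intro a ha
    choose x hxS hxA using ha
    simp only [Set.mem_iUnion]
    refine ⟨x, mem_pi.2 hxA, ?_⟩
    simp only [transversal, coe_image, Set.image_subset_iff]
    exact fun j _ => hxS j.1 j.2
  calc μ {a | ∀ j ∈ J, (S a ∩ A j).Nonempty}
      ≤ ∑ g ∈ J.pi A, μ {a | ↑(transversal g) ⊆ S a} :=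
        (measure_mono hcover).trans (measure_biUnion_finset_le _ _)
    _ ≤ ∑ _g ∈ J.pi A, ENNReal.ofReal (p ^ #J) := sum_le_sum fun g hg => by
        simpa only [transversal, card_image_attach_of_mem_pi hA hg] using hS (transversal g)
    _ = (∏ j ∈ J, #(A j) : ℕ) * ENNReal.ofReal (p ^ #J) := by
        rw [sum_const, nsmul_eq_mul, card_pi]

theorem IsLocalStochasticSet.of_blockwise_triggered {S : α → Set Ω} {p : ℝ}
    (hS : IsLocalStochasticSet μ S p) (hp : 0 ≤ p) {ι : Type*} [Fintype ι] {U V : ℕ}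
    {A B : ι → Finset Ω} (hAdisj : Pairwise (Disjoint on A)) (hAcard : ∀ j, #(A j) ≤ U)
    (hBcard : ∀ j, #(B j) ≤ V) {L : α → Set Ω}
    (hL : ∀ᵐ a ∂μ, (L a ⊆ ⋃ j, ↑(B j)) ∧
      ∀ j, (L a ∩ ↑(B j)).Nonempty → (S a ∩ ↑(A j)).Nonempty)
    {q : ℝ} (hq0 : 0 ≤ q) (hq1 : q ≤ 1) (hUpq : U * p ≤ q ^ V) :
    IsLocalStochasticSet μ L q := by
  classical
  intro W
  set J : Finset ι := {j | (W ∩ B j).Nonempty}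
  have hforce : ∀ᵐ a ∂μ, ↑W ⊆ L a →
      ↑W ⊆ ⋃ j, (B j : Set Ω) ∧ ∀ j ∈ J, (S a ∩ A j).Nonempty := by
    filter_upwards [hL] with a ⟨hLB, hLS⟩ hWL
    refine ⟨hWL.trans hLB, fun j hj => hLS j ?_⟩
    obtain ⟨w, hw⟩ := (mem_filter.1 hj).2
    exact ⟨w, hWL (mem_inter.1 hw).1, (mem_inter.1 hw).2⟩
  by_cases hWB : (W : Set Ω) ⊆ ⋃ j, B j
  swap
  · have hnull : μ {a | ↑W ⊆ L a} = 0 :=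
      measure_mono_null_ae (hforce.mono fun a ha hWL => hWB (ha hWL).1) measure_empty
    simp [hnull]
  have hJ : (∏ j ∈ J, #(A j) : ℕ) ≤ U ^ #J := prod_le_pow_card _ _ _ fun j _ => hAcard j
  calc μ {a | ↑W ⊆ L a} ≤ μ {a | ∀ j ∈ J, (S a ∩ A j).Nonempty} :=
        measure_mono_ae (hforce.mono fun a ha hWL => (ha hWL).2)
    _ ≤ (∏ j ∈ J, #(A j) : ℕ) * ENNReal.ofReal (p ^ #J) :=
        hS.measure_forall_inter_nonempty_le J fun i _ j _ hij => hAdisj hij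
    _ ≤ (U ^ #J : ℕ) * ENNReal.ofReal (p ^ #J) := by gcongr
    _ = ENNReal.ofReal ((U * p) ^ #J) := by
        rw [mul_pow, ENNReal.ofReal_mul (by positivity), ENNReal.ofReal_pow (Nat.cast_nonneg U),
          ENNReal.ofReal_natCast, Nat.cast_pow]
    _ ≤ ENNReal.ofReal (q ^ #W) := by
        refine ENNReal.ofReal_le_ofReal ?_
        calc ((U : ℝ) * p) ^ #J ≤ (q ^ V) ^ #J := by gcongr
          _ = q ^ (#J * V) := by rw [← pow_mul, mul_comm]
          _ ≤ q ^ #W := pow_le_pow_of_le_one hq0 hq1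
              (card_le_card_filter_inter_nonempty_mul hWB hBcard)

end

theorem adaptive_cleaning_localStochastic_general {α Ω : Type*} [MeasurableSpace α] [Fintype Ω]
    (μ : Measure α) [IsProbabilityMeasure μ]
    (p : ℝ) (hp0 : 0 ≤ p)
    (S : α → Set Ω) (hS : IsLocalStochasticSet μ S p)
    (m U V : ℕ) (hV : 1 ≤ V)
    (A B : Fin m → Finset Ω)
    (hAdisj : ∀ i j : Fin m, i ≠ j → Disjoint (A i) (A j))
    (hAcard : ∀ j, (A j).card ≤ U)
    (hBcard : ∀ j, (B j).card ≤ V)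
    (L : α → Set Ω)
    (hL : ∀ᵐ a ∂μ,
      (L a ⊆ ⋃ j : Fin m, ↑(B j)) ∧
        ∀ j : Fin m, (L a ∩ ↑(B j)).Nonempty → (S a ∩ ↑(A j)).Nonempty) :
    IsLocalStochasticSet μ L (((U : ℝ) * p) ^ ((1 : ℝ) / (V : ℝ))) := by
  set q := ((U : ℝ) * p) ^ ((1 : ℝ) / (V : ℝ))
  rcases le_or_gt 1 q with hq1 | hq1
  · exact isLocalStochasticSet_of_one_le L hq1
  have hqV : q ^ V = U * p := by
    simp only [q, one_div]
    exact Real.rpow_inv_natCast_pow (by positivity) (by omega)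
  exact hS.of_blockwise_triggered hp0 (fun i j hij => hAdisj i j hij) hAcard hBcard hL
    (by positivity) hq1.le hqV.ge

/-- **Claim 4.2** (circuit error cleaning for adaptive read-once rectangles): let `S` be
a local stochastic random subset of strength `p`, let `A₁, …, A_m` be pairwise disjoint
subsets of cardinality `≤ U`, and `B₁, …, B_m` pairwise disjoint subsets of cardinality
`≤ V`. If the random subset `L` is almost surely contained in `B₁ ∪ … ∪ B_m` and can
only meet `B_j` when `S` meets `A_j`, then `L` is local stochastic of strength
`(U·p)^(1/V)`. -/
theorem adaptive_cleaning_localStochastic {α Ω : Type*} [MeasurableSpace α] [Fintype Ω]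
    (μ : Measure α) [IsProbabilityMeasure μ]
    (p : ℝ) (hp0 : 0 ≤ p) (hp1 : p ≤ 1)
    (S : α → Set Ω) (hS : IsLocalStochasticSet μ S p)
    (m U V : ℕ) (hU : 1 ≤ U) (hV : 1 ≤ V)
    (A B : Fin m → Finset Ω)
    (hAdisj : ∀ i j : Fin m, i ≠ j → Disjoint (A i) (A j))
    (hAcard : ∀ j, (A j).card ≤ U)
    (hBdisj : ∀ i j : Fin m, i ≠ j → Disjoint (B i) (B j))
    (hBcard : ∀ j, (B j).card ≤ V)
    (L : α → Set Ω)
    (hL : ∀ᵐ a ∂μ,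
      (L a ⊆ ⋃ j : Fin m, ↑(B j)) ∧
        ∀ j : Fin m, (L a ∩ ↑(B j)).Nonempty → (S a ∩ ↑(A j)).Nonempty) :
    IsLocalStochasticSet μ L (((U : ℝ) * p) ^ ((1 : ℝ) / (V : ℝ))) :=
  adaptive_cleaning_localStochastic_general μ p hp0 S hS m U V hV A B hAdisj hAcard hBcard L hL
end

section
/- Fix an even integer r ≥ 4 and consider the vertex set {1, …, 2r}. Define the edge classes of the bilinear array B_{2r}: E′₁ = {{2a−1, 2a} : a ∈ [r−1]}, E′₂ = {{4a−3, 4a−1} : a ∈ [r/2]} ∪ {{4a−2, 4a} : a ∈ [r/2]}, and E′₃ = {{4a−1, 4a+1} : a ∈ [r/2−1]} ∪ {{4a, 4a+2} : a ∈ [r/2−1]}. Define permutations of {1, …, 2r}: π₁ = id, π₂ = ∏_{k=0}^{r/2−1} (4k+2, 4k+3), and π₃ = ∏_{k=1}^{r/2−1} (4k, 4k+1), where each π_α is a product of pairwise disjoint transpositions exchanging consecutive integers. Then for every α ∈ {1,2,3} and every edge {u,v} ∈ E′_α, one has |π_α(u) − π_α(v)| = 1; i.e. π_α maps the color class E′_α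 into the edge set of the path graph P_{2r}. (The verification, stated after Corollary 5.1, that the path graph P_{2r} 1-reduces to the bilinear array graph B_{2r}.) -/
/-!
Each of `π₂` and `π₃` acts on a window `w, w + 1, w + 2, w + 3` of four consecutive integers
by fixing the ends and exchanging the middle pair, and every edge of `E′₂` or `E′₃` joins two
points of such a window at distance two: `{w, w + 2}` or `{w + 1, w + 3}`. Exchanging the
middle pair turns both into pairs of consecutive integers.
-/

theorem Nat.dist_eq_one_of_add_one_eq {m n : ℕ} (h : m + 1 = n) : Nat.dist m n = 1 := by
  rw [Nat.dist_eq_sub_of_le (by omega)]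
  omega

theorem Nat.dist_apply_eq_one_of_swap_middle {f : ℕ → ℕ} {w x y z : ℕ}
    (hx : w + 1 = x) (hz : y + 1 = z)
    (hfw : f w = w) (hfx : f x = y) (hfy : f y = x) (hfz : f z = z) :
    Nat.dist (f w) (f y) = 1 ∧ Nat.dist (f x) (f z) = 1 := by
  rw [hfw, hfx, hfy, hfz]
  exact ⟨Nat.dist_eq_one_of_add_one_eq hx, Nat.dist_eq_one_of_add_one_eq hz⟩

theorem bilinear_array_one_reduces_to_path_general
    (r : ℕ)
    (π₁ π₂ π₃ : Equiv.Perm ℕ)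
    (hπ₁ : π₁ = Equiv.refl ℕ)
    (hπ₂swap : ∀ k : ℕ, k < r / 2 → π₂ (4 * k + 2) = 4 * k + 3 ∧ π₂ (4 * k + 3) = 4 * k + 2)
    (hπ₂fix : ∀ m : ℕ, (∀ k : ℕ, k < r / 2 → m ≠ 4 * k + 2 ∧ m ≠ 4 * k + 3) → π₂ m = m)
    (hπ₃swap : ∀ k : ℕ, 1 ≤ k → k < r / 2 →
      π₃ (4 * k) = 4 * k + 1 ∧ π₃ (4 * k + 1) = 4 * k)
    (hπ₃fix : ∀ m : ℕ, (∀ k : ℕ, 1 ≤ k → k < r / 2 → m ≠ 4 * k ∧ m ≠ 4 * k + 1) → π₃ m = m) :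
    (∀ a : ℕ, 1 ≤ a → a ≤ r - 1 →
      Nat.dist (π₁ (2 * a - 1)) (π₁ (2 * a)) = 1) ∧
    (∀ a : ℕ, 1 ≤ a → a ≤ r / 2 →
      Nat.dist (π₂ (4 * a - 3)) (π₂ (4 * a - 1)) = 1 ∧
        Nat.dist (π₂ (4 * a - 2)) (π₂ (4 * a)) = 1) ∧
    (∀ a : ℕ, 1 ≤ a → a ≤ r / 2 - 1 →
      Nat.dist (π₃ (4 * a - 1)) (π₃ (4 * a + 1)) = 1 ∧
        Nat.dist (π₃ (4 * a)) (π₃ (4 * a + 2)) = 1) := by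
  refine ⟨fun a ha _ => ?_, fun a ha har => ?_, fun a ha har => ?_⟩
  · rw [hπ₁, Equiv.refl_apply, Equiv.refl_apply]
    exact Nat.dist_eq_one_of_add_one_eq (by omega)
  · obtain ⟨hlo, hhi⟩ := hπ₂swap (a - 1) (by omega)
    rw [show 4 * (a - 1) + 2 = 4 * a - 2 by omega, show 4 * (a - 1) + 3 = 4 * a - 1 by omega]
      at hlo hhi
    exact Nat.dist_apply_eq_one_of_swap_middle (by omega) (by omega)
      (hπ₂fix _ fun k _ => by omega) hlo hhi (hπ₂fix _ fun k _ => by omega)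
  · obtain ⟨hlo, hhi⟩ := hπ₃swap a ha (by omega)
    exact Nat.dist_apply_eq_one_of_swap_middle (by omega) (by omega)
      (hπ₃fix _ fun k _ _ => by omega) hlo hhi (hπ₃fix _ fun k _ _ => by omega)

/-- **Verification (after Corollary 5.1) that the path graph `P_{2r}` 1-reduces to the
bilinear array `B_{2r}`**: with `π₁ = id`, `π₂ = ∏_{k=0}^{r/2−1} (4k+2, 4k+3)` and
`π₃ = ∏_{k=1}^{r/2−1} (4k, 4k+1)` — the latter two permutations being characterized by
their action, namely they exchange the indicated pairs of consecutive integers and fix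
all other points — every edge `{u,v}` of the color class `E′_α` of the bilinear array
satisfies `|π_α(u) − π_α(v)| = 1`, i.e. `π_α` maps `E′_α` into the edge set of the path
graph `P_{2r}`. -/
theorem bilinear_array_one_reduces_to_path
    (r : ℕ) (hr : 4 ≤ r) (hre : Even r)
    (π₁ π₂ π₃ : Equiv.Perm ℕ)
    (hπ₁ : π₁ = Equiv.refl ℕ)
    (hπ₂swap : ∀ k : ℕ, k < r / 2 → π₂ (4 * k + 2) = 4 * k + 3 ∧ π₂ (4 * k + 3) = 4 * k + 2)
    (hπ₂fix : ∀ m : ℕ, (∀ k : ℕ, k < r / 2 → m ≠ 4 * k + 2 ∧ m ≠ 4 * k + 3) → π₂ m = m)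
    (hπ₃swap : ∀ k : ℕ, 1 ≤ k → k < r / 2 →
      π₃ (4 * k) = 4 * k + 1 ∧ π₃ (4 * k + 1) = 4 * k)
    (hπ₃fix : ∀ m : ℕ, (∀ k : ℕ, 1 ≤ k → k < r / 2 → m ≠ 4 * k ∧ m ≠ 4 * k + 1) → π₃ m = m) :
    (∀ a : ℕ, 1 ≤ a → a ≤ r - 1 →
      Nat.dist (π₁ (2 * a - 1)) (π₁ (2 * a)) = 1) ∧
    (∀ a : ℕ, 1 ≤ a → a ≤ r / 2 →
      Nat.dist (π₂ (4 * a - 3)) (π₂ (4 * a - 1)) = 1 ∧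
        Nat.dist (π₂ (4 * a - 2)) (π₂ (4 * a)) = 1) ∧
    (∀ a : ℕ, 1 ≤ a → a ≤ r / 2 - 1 →
      Nat.dist (π₃ (4 * a - 1)) (π₃ (4 * a + 1)) = 1 ∧
        Nat.dist (π₃ (4 * a)) (π₃ (4 * a + 2)) = 1) :=
  bilinear_array_one_reduces_to_path_general r π₁ π₂ π₃ hπ₁ hπ₂swap hπ₂fix hπ₃swap hπ₃fix
end
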